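/- For every k >= 4 and every n divisible by 2k-3, the blow-up of J_{k-1} on n vertices with the universal vertex blown up to a class of size ((k-2)/(2k-3))n and each of the other k-1 vertices blown up to classes of size n/(2k-3) contains no K_4^3, no F_{3,2}, and no J_k, and has minimum positive co-degree exactly ((k-2)/(2k-3))n. -/

import Mathlib

/-!
Every edge of the blow-up is rainbow and has exactly one vertex in the universal class `0`, so
two vertices lying in a common edge are in distinct classes. In `K_4^3`, `F_{3,2}` and `J_k` any
two vertices lie in a common edge; hence a copy of `K_4^3` or `F_{3,2}` would have a single vertex
in class `0`, lying in all of its edges, which neither graph has, and a copy of `J_k` would need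
`k + 1` classes. A pair from distinct classes has co-degree `(k-2)m`: it is completed by any vertex
of class `0` if it avoids that class, and otherwise by any of the `n - (k-2)m - m = (k-2)m`
vertices outside its two classes.
-/

open Finset

/-- The blow-up of `J_{|κ|-1}` along `c`, with the universal vertex blown up to the class `u`. -/
def blowupJ {V κ : Type*} [Fintype V] [DecidableEq κ] (c : V → κ) (u : κ) :
    Finset (Finset V) :=
  univ.filter fun e => e.card = 3 ∧ (e.image c).card = 3 ∧ u ∈ e.image c

section Triples

variable {V : Type*} [DecidableEq V]

lemma exists_eq_triple_of_card_eq_three {e : Finset V} {x y : V} (he : e.card = 3)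
    (hx : x ∈ e) (hy : y ∈ e) (hxy : x ≠ y) : ∃ z, e = {x, y, z} := by
  have hy' : y ∈ e.erase x := mem_erase.2 ⟨hxy.symm, hy⟩
  obtain ⟨z, hz⟩ : ∃ z, (e.erase x).erase y = {z} := card_eq_one.1 <| by
    rw [card_erase_of_mem hy', card_erase_of_mem hx, he]
  exact ⟨z, by rw [← hz, insert_erase hy', insert_erase hx]⟩

lemma card_filter_mem_mem_eq_card_filter_triple_mem [Fintype V] {H : Finset (Finset V)}
    (hH : ∀ e ∈ H, e.card = 3) {x y : V} (hxy : x ≠ y) :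
    (H.filter fun e => x ∈ e ∧ y ∈ e).card = (univ.filter fun z => {x, y, z} ∈ H).card := by
  symm
  refine card_bij (fun z _ => {x, y, z}) (fun z hz => by simp_all) ?_ ?_
  · intro z₁ hz₁ z₂ _ h
    have hne := card_triple_eq_three_iff.1 (hH _ (mem_filter.1 hz₁).2)
    have : z₁ ∈ ({x, y, z₂} : Finset V) := h ▸ by simp
    simp only [mem_insert, mem_singleton] at this
    grind
  · intro e he
    obtain ⟨he, hx, hy⟩ := mem_filter.1 he
    obtain ⟨z, rfl⟩ := exists_eq_triple_of_card_eq_three (hH e he) hx hy hxy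
    exact ⟨z, by simpa using he, rfl⟩

lemma exists_mem_mem_of_J {H : Finset (Finset V)} {k : ℕ} (hk : 2 ≤ k) {v : Fin (k + 1) → V}
    (hv : ∀ i j : Fin (k + 1), 0 < i → i < j → {v 0, v i, v j} ∈ H) {i j : Fin (k + 1)}
    (hij : i ≠ j) : ∃ e ∈ H, v i ∈ e ∧ v j ∈ e := by
  wlog hlt : i < j generalizing i j
  · obtain ⟨e, he, hj, hi⟩ := this hij.symm (lt_of_le_of_ne (not_lt.1 hlt) hij.symm)
    exact ⟨e, he, hi, hj⟩
  rcases (Fin.zero_le i).lt_or_eq with hi | rfl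
  · exact ⟨_, hv i j hi hlt, by simp, by simp⟩
  set one : Fin (k + 1) := ⟨1, by omega⟩
  have one_pos : 0 < one := Fin.lt_def.2 Nat.one_pos
  by_cases hj : j = one
  · have one_lt_two' : one < ⟨2, by omega⟩ := Fin.lt_def.2 one_lt_two
    exact ⟨_, hv one _ one_pos one_lt_two', by simp, by simp [hj]⟩
  · have one_lt : one < j := by grind [Fin.lt_def, Fin.ext_iff, Fin.val_zero]
    exact ⟨_, hv one j one_pos one_lt, by simp, by simp⟩

end Triples

section BlowupJ

variable {V κ : Type*} [Fintype V] [DecidableEq V] [DecidableEq κ] {c : V → κ} {u : κ}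

lemma mem_blowupJ_triple {a b d : V} :
    {a, b, d} ∈ blowupJ c u ↔
      c a ≠ c b ∧ c a ≠ c d ∧ c b ≠ c d ∧ (c a = u ∨ c b = u ∨ c d = u) := by
  simp only [blowupJ, mem_filter, mem_univ, true_and, image_insert, image_singleton,
    card_triple_eq_three_iff, mem_insert, mem_singleton]
  grind

lemma class_ne_of_mem_blowupJ {e : Finset V} (he : e ∈ blowupJ c u) {x y : V} (hx : x ∈ e)
    (hy : y ∈ e) (hxy : x ≠ y) : c x ≠ c y := by
  obtain ⟨z, rfl⟩ := exists_eq_triple_of_card_eq_three (mem_filter.1 he).2.1 hx hy hxy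
  exact (mem_blowupJ_triple.1 he).1

lemma blowupJ_not_K4 (p q s t : V) :
    ¬ ({p, q, s} ∈ blowupJ c u ∧ {p, q, t} ∈ blowupJ c u ∧ {p, s, t} ∈ blowupJ c u ∧
      {q, s, t} ∈ blowupJ c u) := by
  simp only [mem_blowupJ_triple]
  grind

lemma blowupJ_not_F32 (p q s t w : V) :
    ¬ ({p, q, s} ∈ blowupJ c u ∧ {p, q, t} ∈ blowupJ c u ∧ {p, q, w} ∈ blowupJ c u ∧
      {s, t, w} ∈ blowupJ c u) := by
  simp only [mem_blowupJ_triple]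
  grind

lemma card_le_of_pairwise_mem_blowupJ [Fintype κ] {ι : Type*} [Fintype ι] {v : ι → V}
    (hv : Function.Injective v)
    (h : ∀ i j, i ≠ j → ∃ e ∈ blowupJ c u, v i ∈ e ∧ v j ∈ e) :
    Fintype.card ι ≤ Fintype.card κ := by
  refine Fintype.card_le_of_injective (c ∘ v) fun i j hij => ?_
  by_contra hne
  obtain ⟨e, he, hi, hj⟩ := h i j hne
  exact class_ne_of_mem_blowupJ he hi hj (hv.ne hne) hij

lemma card_class_ne_ne_add (c : V → κ) {a b : κ} (hab : a ≠ b) :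
    (univ.filter fun z => c z ≠ a ∧ c z ≠ b).card + (univ.filter fun z => c z = a).card +
      (univ.filter fun z => c z = b).card = Fintype.card V := by
  have hdisj : Disjoint (univ.filter fun z => c z = a) (univ.filter fun z => c z = b) :=
    disjoint_filter.2 fun _ _ ha hb => hab (ha.symm.trans hb)
  have := card_filter_add_card_filter_not (s := univ) fun z => c z = a ∨ c z = b
  rw [filter_or, card_union_of_disjoint hdisj, card_univ] at this
  simp only [not_or, ← ne_eq] at this
  omega

lemma card_codegree_blowupJ {s m : ℕ} (hu : (univ.filter fun z => c z = u).card = s)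
    (hw : ∀ w ≠ u, (univ.filter fun z => c z = w).card = m) (hV : Fintype.card V = 2 * s + m)
    {x y : V} (hxy : c x ≠ c y) :
    ((blowupJ c u).filter fun e => x ∈ e ∧ y ∈ e).card = s := by
  rw [card_filter_mem_mem_eq_card_filter_triple_mem (fun e he => (mem_filter.1 he).2.1)
    fun h => hxy (congrArg c h)]
  simp only [mem_blowupJ_triple]
  by_cases h : c x = u ∨ c y = u
  · have := card_class_ne_ne_add c hxy
    rw [filter_congr fun z _ => show _ ↔ c z ≠ c x ∧ c z ≠ c y by grind]
    rcases h with rfl | rfl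
    · rw [hu, hw _ hxy.symm] at this
      omega
    · rw [hw _ hxy, hu] at this
      omega
  · rw [← hu, filter_congr fun z _ => show _ ↔ c z = u by grind]

end BlowupJ

theorem stmt_4 (k m n : ℕ) (hk : 4 ≤ k) (hm : 1 ≤ m) (hn : n = (2 * k - 3) * m)
    (c : Fin n → Fin k)
    (hsize : ∀ i : Fin k, (Finset.univ.filter (fun v => c v = i)).card =
      if (i : ℕ) = 0 then (k - 2) * m else m)
    (H : Finset (Finset (Fin n)))
    (hH : H = Finset.univ.filter (fun e : Finset (Fin n) =>
      e.card = 3 ∧ (e.image c).card = 3 ∧ (⟨0, by omega⟩ : Fin k) ∈ e.image c)) :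
    -- no K_4^3
    (¬ ∃ p q s t : Fin n, ({p, q, s, t} : Finset (Fin n)).card = 4 ∧
      ({p, q, s} : Finset (Fin n)) ∈ H ∧ ({p, q, t} : Finset (Fin n)) ∈ H ∧
      ({p, s, t} : Finset (Fin n)) ∈ H ∧ ({q, s, t} : Finset (Fin n)) ∈ H) ∧
    -- no F_{3,2}
    (¬ ∃ p q s t u : Fin n, ({p, q, s, t, u} : Finset (Fin n)).card = 5 ∧
      ({p, q, s} : Finset (Fin n)) ∈ H ∧ ({p, q, t} : Finset (Fin n)) ∈ H ∧
      ({p, q, u} : Finset (Fin n)) ∈ H ∧ ({s, t, u} : Finset (Fin n)) ∈ H) ∧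
    -- no J_k
    (¬ ∃ v : Fin (k + 1) → Fin n, Function.Injective v ∧
      ∀ i j : Fin (k + 1), 0 < i → i < j → ({v 0, v i, v j} : Finset (Fin n)) ∈ H) ∧
    -- minimum positive co-degree exactly (k-2) * m
    (∀ x y : Fin n, x ≠ y → (∃ e ∈ H, x ∈ e ∧ y ∈ e) →
      (k - 2) * m ≤ (H.filter (fun e => x ∈ e ∧ y ∈ e)).card) ∧
    (∃ x y : Fin n, x ≠ y ∧ (∃ e ∈ H, x ∈ e ∧ y ∈ e) ∧
      (H.filter (fun e => x ∈ e ∧ y ∈ e)).card = (k - 2) * m) := by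
  obtain rfl : H = blowupJ c ⟨0, by omega⟩ := hH
  have hV : Fintype.card (Fin n) = 2 * ((k - 2) * m) + m := by
    obtain ⟨j, rfl⟩ : ∃ j, k = j + 2 := ⟨k - 2, by omega⟩
    rw [Fintype.card_fin, hn, Nat.add_sub_cancel, show 2 * (j + 2) - 3 = 2 * j + 1 by omega]
    ring
  have codegree {x y : Fin n} (hxy : c x ≠ c y) :=
    card_codegree_blowupJ (by simpa using hsize ⟨0, by omega⟩)
      (fun w hw => by rw [hsize, if_neg (hw ∘ Fin.ext)]) hV hxy
  have class_nonempty (w : Fin k) : ∃ z, c z = w := by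
    obtain ⟨z, hz⟩ := card_pos.1 (show 0 < #(univ.filter fun z => c z = w) by
      rw [hsize]; split_ifs <;> first | exact Nat.mul_pos (by omega) hm | omega)
    exact ⟨z, (mem_filter.1 hz).2⟩
  refine ⟨fun ⟨p, q, s, t, _, h⟩ => blowupJ_not_K4 p q s t h,
    fun ⟨p, q, s, t, u, _, h⟩ => blowupJ_not_F32 p q s t u h, ?_, ?_, ?_⟩
  · rintro ⟨v, hv, hJ⟩
    have := card_le_of_pairwise_mem_blowupJ hv fun i j hij =>
      exists_mem_mem_of_J (by omega) hJ hij
    simp at this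
  · rintro x y hxy ⟨e, he, hx, hy⟩
    exact (codegree (class_ne_of_mem_blowupJ he hx hy hxy)).ge
  · obtain ⟨x, hx⟩ := class_nonempty ⟨0, by omega⟩
    obtain ⟨y, hy⟩ := class_nonempty ⟨1, by omega⟩
    obtain ⟨z, hz⟩ := class_nonempty ⟨2, by omega⟩
    have hxyz : {x, y, z} ∈ blowupJ c ⟨0, by omega⟩ :=
      mem_blowupJ_triple.2 (by simp [hx, hy, hz, Fin.ext_iff])
    have hcxy := (mem_blowupJ_triple.1 hxyz).1
    exact ⟨x, y, fun h => hcxy (congrArg c h), ⟨_, hxyz, by simp, by simp⟩, codegree hcxy⟩
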